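/- If T is a linear isometry of (V, d_{w,(P,π)}) then for every i ∈ [s] and every nonzero v_i ∈ V_i, the ideal generated by supp_π(T(v_i)) is a principal ideal of P. -/

import Mathlib

attribute [local instance] Classical.propDecidable

noncomputable section

variable {ι F : Type*}

section Defs
variable [Fintype ι] [PartialOrder ι] [Field F] [Fintype F] {k : ι → ℕ}

/-- block support -/
def suppB (u : ∀ i, Fin (k i) → F) : Finset ι :=
  Finset.univ.filter fun i => u i ≠ 0

/-- order ideal generated by the block support -/
def idealOf (u : ∀ i, Fin (k i) → F) : Finset ι :=
  Finset.univ.filter fun i => ∃ j ∈ suppB u, i ≤ j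

/-- maximal elements of the ideal generated by the support -/
def maxOf (u : ∀ i, Fin (k i) → F) : Finset ι :=
  (idealOf u).filter fun i => ∀ j ∈ idealOf u, i ≤ j → i = j

/-- maximal weight of a block -/
def Wblk (w : F → ℕ) (u : ∀ i, Fin (k i) → F) (i : ι) : ℕ :=
  Finset.univ.sup fun j => w (u i j)

/-- maximal value of the weight -/
def Mw (w : F → ℕ) : ℕ := Finset.univ.sup w

/-- minimal value of the weight on nonzero elements -/
def mw (w : F → ℕ) : ℕ := sInf (w '' {a | a ≠ 0})

/-- the weighted poset block weight -/
def omegaW (w : F → ℕ) (u : ∀ i, Fin (k i) → F) : ℕ :=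
  (∑ i ∈ maxOf u, Wblk w u i) + (idealOf u \ maxOf u).card * Mw w

/-- principal ideal generated by `i` -/
def pIdeal (i : ι) : Finset ι := Finset.univ.filter fun j => j ≤ i

end Defs

/-!
Write `ω(u) = ∑_{i ∈ I(u)} t_u(i)`, where a maximal element `i` of the ideal `I(u)` generated
by the support contributes its block weight `W(u_i)` and every other element the maximal weight
`M` (`omegaTerm`); `m > 0` is the least weight of a nonzero scalar. Let `v ∈ V_a` be nonzero
and suppose `I(u)`, `u = T v`, has two maximal elements `j ≠ j'`; after rescaling,
`W(u_j) = M`. Then `|⟨j⟩| M + m ≤ ω(u) = ω(v) ≤ |⟨a⟩| M`, so `|⟨j⟩| < |⟨a⟩|`.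
The isometry `T` is bijective, so the `j`-block of `u` is `T x` for some `x`, and
`ω(x) ≤ |⟨j⟩| M` forces `x_a = 0`. Hence `v - x` still has `a`-block `v_a`, so
`ω(v - x) ≥ ω(v)`, whereas `T (v - x)` is `u` with its `j`-block deleted, of weight
at most `ω(u) - W(u_j) < ω(v)`.
-/

open Finset

section Weights
variable {k : ι → ℕ} (w : F → ℕ)

lemma mw_pos [Field F] (hw0 : ∀ a : F, w a = 0 ↔ a = 0) : 0 < mw w := by
  have hne : (w '' {a | a ≠ 0}).Nonempty := ⟨w 1, 1, one_ne_zero, rfl⟩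
  obtain ⟨a, ha, hmw⟩ := Nat.sInf_mem hne
  rw [Nat.pos_iff_ne_zero, mw, ← hmw]
  exact fun h => ha ((hw0 a).1 h)

lemma mw_le_Wblk [Field F] {u : ∀ i, Fin (k i) → F} {i : ι} (h : u i ≠ 0) :
    mw w ≤ Wblk w u i := by
  obtain ⟨t, ht⟩ := Function.ne_iff.1 h
  have hmw : mw w ≤ w (u i t) := Nat.sInf_le ⟨u i t, ht, rfl⟩
  exact hmw.trans (le_sup (f := fun t => w (u i t)) (mem_univ t))

lemma Wblk_le_Mw [Fintype F] (u : ∀ i, Fin (k i) → F) (i : ι) : Wblk w u i ≤ Mw w :=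
  Finset.sup_le fun t _ => le_sup (f := w) (mem_univ (u i t))

lemma exists_smul_Wblk_eq_Mw [Field F] [Fintype F] (hw0 : ∀ a : F, w a = 0 ↔ a = 0)
    {u : ∀ i, Fin (k i) → F} {j : ι} (h : u j ≠ 0) :
    ∃ c : F, c ≠ 0 ∧ Wblk w (c • u) j = Mw w := by
  obtain ⟨b, -, hb⟩ := exists_mem_eq_sup univ univ_nonempty w
  have hb0 : b ≠ 0 := by
    rintro rfl
    have h1 : w 1 ≤ Mw w := le_sup (f := w) (mem_univ 1)
    rw [Mw, hb, (hw0 0).2 rfl, Nat.le_zero, hw0] at h1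
    exact one_ne_zero h1
  obtain ⟨t, ht⟩ := Function.ne_iff.1 h
  refine ⟨b * (u j t)⁻¹, mul_ne_zero hb0 (inv_ne_zero ht), le_antisymm (Wblk_le_Mw w _ j) ?_⟩
  have hcoord : (b * (u j t)⁻¹) • u j t = b := by
    rw [smul_eq_mul, mul_assoc, inv_mul_cancel₀ ht, mul_one]
  calc Mw w = w ((b * (u j t)⁻¹) • u j t) := by rw [hcoord, Mw, hb]
    _ ≤ Wblk w ((b * (u j t)⁻¹) • u) j :=
        le_sup (f := fun s => w (((b * (u j t)⁻¹) • u) j s)) (mem_univ t)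

end Weights

section Supports
variable [Fintype ι] [Field F] {k : ι → ℕ} {u : ∀ i, Fin (k i) → F} {a : ι}

lemma mem_suppB : a ∈ suppB u ↔ u a ≠ 0 := by simp [suppB]

lemma suppB_smul {c : F} (hc : c ≠ 0) (u : ∀ i, Fin (k i) → F) :
    suppB (c • u) = suppB u := by
  ext b
  simp [mem_suppB, hc]

lemma apply_ne_zero_of_suppB_subset_singleton (hu : suppB u ⊆ {a}) (h : u ≠ 0) : u a ≠ 0 := by
  obtain ⟨i, hi⟩ := Function.ne_iff.1 h
  exact mem_singleton.1 (hu (mem_suppB.2 hi)) ▸ hi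

lemma suppB_sub_update_zero_subset (u : ∀ i, Fin (k i) → F) (j : ι) :
    suppB (u - Function.update u j 0) ⊆ {j} := by
  intro i hi
  by_contra hij
  exact mem_suppB.1 hi (by simp [Function.update_of_ne (mem_singleton.not.1 hij)])

end Supports

section Ideals
variable [Fintype ι] [PartialOrder ι] [Field F] {k : ι → ℕ}
  {u : ∀ i, Fin (k i) → F} {a j : ι}

lemma mem_idealOf : a ∈ idealOf u ↔ ∃ j ∈ suppB u, a ≤ j := by simp [idealOf]

lemma mem_maxOf : a ∈ maxOf u ↔ a ∈ idealOf u ∧ ∀ j ∈ idealOf u, a ≤ j → a = j := by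
  simp [maxOf]

lemma mem_pIdeal : a ∈ pIdeal j ↔ a ≤ j := by simp [pIdeal]

lemma suppB_subset_idealOf (u : ∀ i, Fin (k i) → F) : suppB u ⊆ idealOf u :=
  fun a ha => mem_idealOf.2 ⟨a, ha, le_rfl⟩

lemma mem_idealOf_of_le (hj : j ∈ idealOf u) (haj : a ≤ j) : a ∈ idealOf u := by
  obtain ⟨b, hb, hjb⟩ := mem_idealOf.1 hj
  exact mem_idealOf.2 ⟨b, hb, haj.trans hjb⟩

lemma maxOf_subset_suppB : maxOf u ⊆ suppB u := by
  intro a ha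
  obtain ⟨haI, hmax⟩ := mem_maxOf.1 ha
  obtain ⟨j, hj, haj⟩ := mem_idealOf.1 haI
  exact hmax j (suppB_subset_idealOf u hj) haj ▸ hj

lemma exists_le_mem_maxOf (ha : a ∈ idealOf u) : ∃ b ∈ maxOf u, a ≤ b := by
  obtain ⟨b, hb, hmax⟩ :=
    exists_maximal (s := {b ∈ idealOf u | a ≤ b}) ⟨a, mem_filter.2 ⟨ha, le_rfl⟩⟩
  obtain ⟨hbI, hab⟩ := mem_filter.1 hb
  refine ⟨b, mem_maxOf.2 ⟨hbI, fun j hj hbj => ?_⟩, hab⟩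
  exact le_antisymm hbj (hmax (mem_filter.2 ⟨hj, hab.trans hbj⟩) hbj)

lemma maxOf_nonempty (hu : u ≠ 0) : (maxOf u).Nonempty := by
  obtain ⟨a, ha⟩ := Function.ne_iff.1 hu
  obtain ⟨b, hb, -⟩ := exists_le_mem_maxOf (suppB_subset_idealOf u (mem_suppB.2 ha))
  exact ⟨b, hb⟩

lemma idealOf_subset_pIdeal (h : suppB u ⊆ {j}) : idealOf u ⊆ pIdeal j := by
  intro a ha
  obtain ⟨b, hb, hab⟩ := mem_idealOf.1 ha
  exact mem_pIdeal.2 (mem_singleton.1 (h hb) ▸ hab)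

lemma idealOf_eq_pIdeal_of_maxOf_eq_singleton (h : maxOf u = {j}) : idealOf u = pIdeal j := by
  have hj : j ∈ maxOf u := h ▸ mem_singleton_self j
  ext a
  rw [mem_pIdeal]
  refine ⟨fun ha => ?_, mem_idealOf_of_le (mem_maxOf.1 hj).1⟩
  obtain ⟨b, hb, hab⟩ := exists_le_mem_maxOf ha
  rw [h, mem_singleton] at hb
  exact hb ▸ hab

lemma maxOf_eq_singleton_of_suppB_subset_singleton (hu : suppB u ⊆ {a}) (ha : u a ≠ 0) :
    maxOf u = {a} := by
  refine eq_singleton_iff_unique_mem.2 ⟨mem_maxOf.2 ⟨suppB_subset_idealOf u (mem_suppB.2 ha),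
    fun j hj haj => le_antisymm haj (mem_pIdeal.1 (idealOf_subset_pIdeal hu hj))⟩, ?_⟩
  exact fun b hb => mem_singleton.1 (hu (maxOf_subset_suppB hb))

lemma maxOf_smul {c : F} (hc : c ≠ 0) (u : ∀ i, Fin (k i) → F) :
    maxOf (c • u) = maxOf u := by
  unfold maxOf idealOf
  rw [suppB_smul hc]

lemma idealOf_update_zero_subset (hj : j ∈ maxOf u) :
    idealOf (Function.update u j 0) ⊆ (idealOf u).erase j := by
  intro a ha
  obtain ⟨b, hb, hab⟩ := mem_idealOf.1 ha
  have hbj : b ≠ j := fun h => mem_suppB.1 hb (h ▸ Function.update_self ..)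
  have hbu : b ∈ suppB u :=
    mem_suppB.2 (by simpa [Function.update_of_ne hbj] using mem_suppB.1 hb)
  refine mem_erase.2 ⟨fun haj => hbj ?_, mem_idealOf.2 ⟨b, hbu, hab⟩⟩
  exact ((mem_maxOf.1 hj).2 b (suppB_subset_idealOf u hbu) (haj ▸ hab)).symm

end Ideals

section Isometries
variable [Fintype ι] [PartialOrder ι] [Field F] [Fintype F] {k : ι → ℕ} (w : F → ℕ)
  {u v : ∀ i, Fin (k i) → F} {a j : ι}

def omegaTerm (u : ∀ i, Fin (k i) → F) (i : ι) : ℕ :=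
  if i ∈ maxOf u then Wblk w u i else Mw w

lemma omegaW_eq_sum_omegaTerm (u : ∀ i, Fin (k i) → F) :
    omegaW w u = ∑ i ∈ idealOf u, omegaTerm w u i := by
  have hmax : maxOf u ⊆ idealOf u := filter_subset _ _
  unfold omegaTerm
  rw [sum_ite, filter_mem_eq_inter, inter_eq_right.2 hmax, filter_notMem_eq_sdiff,
    sum_const, smul_eq_mul, omegaW]

lemma Wblk_le_omegaTerm (u : ∀ i, Fin (k i) → F) (i : ι) : Wblk w u i ≤ omegaTerm w u i := by
  unfold omegaTerm
  split_ifs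
  exacts [le_rfl, Wblk_le_Mw w u i]

lemma omegaTerm_le_Mw (u : ∀ i, Fin (k i) → F) (i : ι) : omegaTerm w u i ≤ Mw w := by
  unfold omegaTerm
  split_ifs
  exacts [Wblk_le_Mw w u i, le_rfl]

lemma omegaTerm_of_lt {i : ι} (hij : i < j) (hj : j ∈ idealOf u) : omegaTerm w u i = Mw w :=
  if_neg fun hi => hij.ne ((mem_maxOf.1 hi).2 j hj hij.le)

lemma omegaW_le_card_mul_Mw (u : ∀ i, Fin (k i) → F) : omegaW w u ≤ #(idealOf u) * Mw w := by
  rw [omegaW_eq_sum_omegaTerm, ← smul_eq_mul]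
  exact sum_le_card_nsmul _ _ _ fun i _ => omegaTerm_le_Mw w u i

lemma omegaW_le_card_pIdeal_mul_Mw (hu : suppB u ⊆ {a}) : omegaW w u ≤ #(pIdeal a) * Mw w :=
  (omegaW_le_card_mul_Mw w u).trans
    (Nat.mul_le_mul_right _ (card_le_card (idealOf_subset_pIdeal hu)))

lemma sum_omegaTerm_le_omegaW {s : Finset ι} (hs : s ⊆ idealOf u) :
    ∑ i ∈ s, omegaTerm w u i ≤ omegaW w u :=
  omegaW_eq_sum_omegaTerm w u ▸ sum_le_sum_of_subset hs

lemma omegaW_eq_zero_iff (hw0 : ∀ a : F, w a = 0 ↔ a = 0) : omegaW w u = 0 ↔ u = 0 := by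
  refine ⟨fun h => ?_, fun h => by simp [h, omegaW_eq_sum_omegaTerm, idealOf, suppB]⟩
  by_contra hu
  obtain ⟨j, hj⟩ := maxOf_nonempty hu
  have hterm : omegaTerm w u j ≤ omegaW w u :=
    sum_singleton (omegaTerm w u) j ▸
      sum_omegaTerm_le_omegaW w (singleton_subset_iff.2 (mem_maxOf.1 hj).1)
  have := (mw_pos w hw0).trans_le ((mw_le_Wblk w (mem_suppB.1 (maxOf_subset_suppB hj))).trans
    (Wblk_le_omegaTerm w u j))
  omega

lemma card_erase_mul_Mw_add_Wblk_le_omegaW (ha : u a ≠ 0) :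
    #((pIdeal a).erase a) * Mw w + Wblk w u a ≤ omegaW w u := by
  have haI : a ∈ idealOf u := suppB_subset_idealOf u (mem_suppB.2 ha)
  have hsub : pIdeal a ⊆ idealOf u := fun i hi => mem_idealOf_of_le haI (mem_pIdeal.1 hi)
  have hrest : ∑ i ∈ (pIdeal a).erase a, omegaTerm w u i = #((pIdeal a).erase a) * Mw w := by
    rw [← smul_eq_mul, ← sum_const]
    refine sum_congr rfl fun i hi => omegaTerm_of_lt w ?_ haI
    obtain ⟨hia, hle⟩ := mem_erase.1 hi
    exact lt_of_le_of_ne (mem_pIdeal.1 hle) hia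
  calc #((pIdeal a).erase a) * Mw w + Wblk w u a
      ≤ ∑ i ∈ (pIdeal a).erase a, omegaTerm w u i + omegaTerm w u a := by
        rw [hrest]; exact Nat.add_le_add_left (Wblk_le_omegaTerm w u a) _
    _ = ∑ i ∈ pIdeal a, omegaTerm w u i := sum_erase_add _ _ (mem_pIdeal.2 le_rfl)
    _ ≤ omegaW w u := sum_omegaTerm_le_omegaW w hsub

lemma omegaW_of_suppB_subset_singleton (hu : suppB u ⊆ {a}) (ha : u a ≠ 0) :
    omegaW w u = #((pIdeal a).erase a) * Mw w + Wblk w u a := by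
  have hmax := maxOf_eq_singleton_of_suppB_subset_singleton hu ha
  rw [omegaW, hmax, idealOf_eq_pIdeal_of_maxOf_eq_singleton hmax, sum_singleton,
    sdiff_singleton_eq_erase, add_comm]

lemma card_pIdeal_mul_Mw_add_mw_le_omegaW {j' : ι} (hj : j ∈ maxOf u) (hj' : j' ∈ maxOf u)
    (hne : j' ≠ j) (hM : Wblk w u j = Mw w) : #(pIdeal j) * Mw w + mw w ≤ omegaW w u := by
  have hjI := (mem_maxOf.1 hj).1
  have hj'j : j' ∉ pIdeal j := fun h => hne ((mem_maxOf.1 hj').2 j hjI (mem_pIdeal.1 h))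
  have hsub : insert j' (pIdeal j) ⊆ idealOf u := insert_subset (mem_maxOf.1 hj').1
    fun i hi => mem_idealOf_of_le hjI (mem_pIdeal.1 hi)
  have hideal : #(pIdeal j) * Mw w ≤ ∑ i ∈ pIdeal j, omegaTerm w u i := by
    rw [← smul_eq_mul]
    refine card_nsmul_le_sum _ _ _ fun i hi => ?_
    rcases (mem_pIdeal.1 hi).lt_or_eq with hij | rfl
    · exact (omegaTerm_of_lt w hij hjI).ge
    · exact hM ▸ Wblk_le_omegaTerm w u i
  have hj'term : mw w ≤ omegaTerm w u j' :=
    (mw_le_Wblk w (mem_suppB.1 (maxOf_subset_suppB hj'))).trans (Wblk_le_omegaTerm w u j')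
  calc #(pIdeal j) * Mw w + mw w
      ≤ omegaTerm w u j' + ∑ i ∈ pIdeal j, omegaTerm w u i := by omega
    _ = ∑ i ∈ insert j' (pIdeal j), omegaTerm w u i := (sum_insert hj'j).symm
    _ ≤ omegaW w u := sum_omegaTerm_le_omegaW w hsub

lemma omegaTerm_update_zero_le (hj : j ∈ maxOf u) {i : ι}
    (hi : i ∈ idealOf (Function.update u j 0)) :
    omegaTerm w (Function.update u j 0) i ≤ omegaTerm w u i := by
  have hsub := idealOf_update_zero_subset hj
  obtain ⟨hij, -⟩ := mem_erase.1 (hsub hi)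
  by_cases hiu : i ∈ maxOf u
  · have hi' : i ∈ maxOf (Function.update u j 0) :=
      mem_maxOf.2 ⟨hi, fun b hb => (mem_maxOf.1 hiu).2 b (mem_of_mem_erase (hsub hb))⟩
    simp [omegaTerm, hiu, hi', Wblk, Function.update_of_ne hij]
  · exact (omegaTerm_le_Mw w _ i).trans_eq (if_neg hiu).symm

lemma omegaW_update_zero_add_Wblk_le (hj : j ∈ maxOf u) :
    omegaW w (Function.update u j 0) + Wblk w u j ≤ omegaW w u := by
  have hterm : omegaTerm w u j = Wblk w u j := if_pos hj
  calc omegaW w (Function.update u j 0) + Wblk w u j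
      ≤ ∑ i ∈ idealOf (Function.update u j 0), omegaTerm w u i + omegaTerm w u j := by
        rw [omegaW_eq_sum_omegaTerm, hterm]
        exact Nat.add_le_add_right (sum_le_sum fun i hi => omegaTerm_update_zero_le w hj hi) _
    _ ≤ ∑ i ∈ (idealOf u).erase j, omegaTerm w u i + omegaTerm w u j :=
        Nat.add_le_add_right (sum_le_sum_of_subset (idealOf_update_zero_subset hj)) _
    _ = omegaW w u := by rw [sum_erase_add _ _ (mem_maxOf.1 hj).1, omegaW_eq_sum_omegaTerm]

variable (T : (∀ i, Fin (k i) → F) →ₗ[F] (∀ i, Fin (k i) → F))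
  (hT : ∀ u : ∀ i, Fin (k i) → F, omegaW w (T u) = omegaW w u)
include hT

lemma surjective_of_omegaW_map_eq (hw0 : ∀ a : F, w a = 0 ↔ a = 0) : Function.Surjective T := by
  refine LinearMap.injective_iff_surjective.1 ((injective_iff_map_eq_zero T).2 fun x hx => ?_)
  rw [← omegaW_eq_zero_iff w hw0, ← hT, hx, omegaW_eq_zero_iff w hw0]

theorem maxOf_map_eq_singleton (hw0 : ∀ a : F, w a = 0 ↔ a = 0) (hv : suppB v ⊆ {a})
    (hj : j ∈ maxOf (T v)) (hM : Wblk w (T v) j = Mw w) : maxOf (T v) = {j} := by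
  set u := T v
  have huj : u j ≠ 0 := mem_suppB.1 (maxOf_subset_suppB hj)
  have hva : v a ≠ 0 := apply_ne_zero_of_suppB_subset_singleton hv fun h => huj (by simp [u, h])
  have hm := mw_pos w hw0
  have hcard := card_erase_add_one (mem_pIdeal.2 (le_refl a))
  refine eq_singleton_iff_unique_mem.2 ⟨hj, fun j' hj' => by_contra fun hne => ?_⟩
  have hlt : #(pIdeal j) < #(pIdeal a) := by
    have h1 := card_pIdeal_mul_Mw_add_mw_le_omegaW w hj hj' hne hM
    have h2 := hT v ▸ omegaW_le_card_pIdeal_mul_Mw w hv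
    by_contra! h
    nlinarith [Nat.mul_le_mul_right (Mw w) h]
  obtain ⟨x, hx⟩ := surjective_of_omegaW_map_eq w T hT hw0 (u - Function.update u j 0)
  have hxa : x a = 0 := by
    by_contra hxa
    have h1 := card_erase_mul_Mw_add_Wblk_le_omegaW w hxa
    have h2 : omegaW w x ≤ #(pIdeal j) * Mw w := by
      rw [← hT, hx]
      exact omegaW_le_card_pIdeal_mul_Mw w (suppB_sub_update_zero_subset u j)
    have h3 := mw_le_Wblk w hxa
    nlinarith [Nat.mul_le_mul_right (Mw w) (show #(pIdeal j) ≤ #((pIdeal a).erase a) by omega)]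
  have hTy : T (v - x) = Function.update u j 0 := by rw [map_sub, hx, sub_sub_cancel]
  have hya : (v - x) a = v a := by rw [Pi.sub_apply, hxa, sub_zero]
  have hW : Wblk w (v - x) a = Wblk w v a := by simp only [Wblk, hya]
  have hvx : omegaW w v ≤ omegaW w (Function.update u j 0) := by
    have h := card_erase_mul_Mw_add_Wblk_le_omegaW w (u := v - x) (hya ▸ hva)
    rwa [hW, ← omegaW_of_suppB_subset_singleton w hv hva, ← hT (v - x), hTy] at h
  have hdrop := omegaW_update_zero_add_Wblk_le w hj
  have hWj := mw_le_Wblk w huj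
  have huv : omegaW w u = omegaW w v := hT v
  omega

end Isometries

theorem stmt7_general [Fintype ι] [PartialOrder ι] [Field F] [Fintype F] {k : ι → ℕ}
    (w : F → ℕ)
    (hw0 : ∀ a : F, w a = 0 ↔ a = 0)
    (T : (∀ i, Fin (k i) → F) →ₗ[F] (∀ i, Fin (k i) → F))
    (hT : ∀ u : ∀ i, Fin (k i) → F, omegaW w (T u) = omegaW w u) :
    ∀ (i : ι) (v : ∀ i, Fin (k i) → F), suppB v ⊆ {i} → v ≠ 0 →
      ∃ j : ι, idealOf (T v) = pIdeal j := by
  intro a v hv hv0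
  have hu0 : T v ≠ 0 := by
    rwa [Ne, ← omegaW_eq_zero_iff w hw0, hT, omegaW_eq_zero_iff w hw0]
  obtain ⟨j, hj⟩ := maxOf_nonempty hu0
  obtain ⟨c, hc, hcM⟩ := exists_smul_Wblk_eq_Mw w hw0 (mem_suppB.1 (maxOf_subset_suppB hj))
  have hmax := maxOf_map_eq_singleton w T hT hw0 (suppB_smul hc v ▸ hv)
    (by rwa [map_smul, maxOf_smul hc]) (by rwa [map_smul])
  rw [map_smul, maxOf_smul hc] at hmax
  exact ⟨j, idealOf_eq_pIdeal_of_maxOf_eq_singleton hmax⟩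

/-- For a linear isometry `T` and nonzero `v_i ∈ V_i`, the ideal generated by
`supp_π(T v_i)` is a principal ideal. -/
theorem stmt7 [Fintype ι] [PartialOrder ι] [Field F] [Fintype F] {k : ι → ℕ}
    (w : F → ℕ)
    (hw0 : ∀ a : F, w a = 0 ↔ a = 0)
    (hwneg : ∀ a : F, w (-a) = w a)
    (hwadd : ∀ a b : F, w (a + b) ≤ w a + w b)
    (T : (∀ i, Fin (k i) → F) →ₗ[F] (∀ i, Fin (k i) → F))
    (hT : ∀ u : ∀ i, Fin (k i) → F, omegaW w (T u) = omegaW w u) :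
    ∀ (i : ι) (v : ∀ i, Fin (k i) → F), suppB v ⊆ {i} → v ≠ 0 →
      ∃ j : ι, idealOf (T v) = pIdeal j :=
  stmt7_general w hw0 T hT
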